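/- Let -3/2 < σ < -1. There exists a constant c_σ such that for every f ∈ L²(ℝ³) ∩ 𝒳^{-1}(ℝ³), ‖f‖_{𝒳^σ} ≤ c_σ ‖f‖_{L²}^{-2σ-2} ‖f‖_{𝒳^{-1}}^{2σ+3}. -/

import Mathlib

/-!
Split the integral at `‖ξ‖ = r`. On the ball, Cauchy–Schwarz against the weight `‖ξ‖ ^ (2σ)`,
integrable near `0` because `2σ > -3`, gives `C r ^ (σ + 3/2) ‖f‖_{L²}`; off the ball,
`‖ξ‖ ^ σ ≤ r ^ (σ + 1) ‖ξ‖⁻¹` because `σ + 1 < 0`, giving `r ^ (σ + 1) ‖f‖_{𝒳^{-1}}`.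
The choice `r = (‖f‖_{𝒳^{-1}} / ‖f‖_{L²}) ^ 2` balances the two terms.
-/

open MeasureTheory Real Set Metric

theorem integral_mul_le_sqrt_mul_sqrt {α : Type*} [MeasurableSpace α] {μ : Measure α}
    {f g : α → ℝ} (hf₀ : 0 ≤ᵐ[μ] f) (hg₀ : 0 ≤ᵐ[μ] g) (hf : MemLp f 2 μ) (hg : MemLp g 2 μ) :
    ∫ a, f a * g a ∂μ ≤ √(∫ a, f a ^ 2 ∂μ) * √(∫ a, g a ^ 2 ∂μ) := by
  have h := integral_mul_le_Lp_mul_Lq_of_nonneg Real.HolderConjugate.two_two hf₀ hg₀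
    (by simpa using hf) (by simpa using hg)
  simpa only [Real.rpow_two, ← Real.sqrt_eq_rpow] using h

theorem ae_eq_zero_of_integral_sq_eq_zero {α : Type*} [MeasurableSpace α] {μ : Measure α}
    {g : α → ℝ} (hg : Integrable (fun a => g a ^ 2) μ) (h : ∫ a, g a ^ 2 ∂μ = 0) : g =ᵐ[μ] 0 :=
  ((integral_eq_zero_iff_of_nonneg (fun a => sq_nonneg (g a)) hg).1 h).mono
    fun _ ha => pow_eq_zero_iff two_ne_zero |>.1 ha

theorem memLp_two_of_integrable_sq {α : Type*} [MeasurableSpace α] {μ : Measure α}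
    {g : α → ℝ} (hg₀ : 0 ≤ g) (hg : Integrable (fun a => g a ^ 2) μ) : MemLp g 2 μ := by
  refine (memLp_two_iff_integrable_sq ?_).2 hg
  exact (Real.continuous_sqrt.comp_aestronglyMeasurable hg.aestronglyMeasurable).congr
    (.of_forall fun a => Real.sqrt_sq (hg₀ a))

theorem Real.rpow_le_rpow_add_one_mul_inv {r s a : ℝ} (hr : 0 < r) (hrs : r ≤ s) (ha : a ≤ -1) :
    s ^ a ≤ r ^ (a + 1) * s⁻¹ := by
  have hs : 0 < s := hr.trans_le hrs
  calc s ^ a = s ^ (a + 1) * s⁻¹ := by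
        rw [← Real.rpow_neg_one s, ← Real.rpow_add hs, add_neg_cancel_right]
    _ ≤ r ^ (a + 1) * s⁻¹ := by
        gcongr ?_ * _
        exact Real.rpow_le_rpow_of_nonpos hr hrs (by linarith)

theorem exists_rpow_mul_add_rpow_mul_eq {A B C σ : ℝ} (hA : 0 < A) (hB : 0 < B) :
    ∃ r > 0, C * r ^ (σ + 3 / 2) * A + r ^ (σ + 1) * B =
      (C + 1) * A ^ (-2 * σ - 2) * B ^ (2 * σ + 3) := by
  refine ⟨(B / A) ^ 2, by positivity, ?_⟩
  have hBA : 0 < B / A := div_pos hB hA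
  rw [← Real.rpow_natCast_mul hBA.le, ← Real.rpow_natCast_mul hBA.le,
    Real.div_rpow hB.le hA.le, Real.div_rpow hB.le hA.le]
  have e₁ : (2 : ℕ) * (σ + 3 / 2) = (2 * σ + 2) + 1 := by push_cast; ring
  have e₂ : (2 : ℕ) * (σ + 1) = 2 * σ + 2 := by push_cast; ring
  rw [e₁, e₂, show 2 * σ + 3 = (2 * σ + 2) + 1 by ring, show -2 * σ - 2 = -(2 * σ + 2) by ring,
    Real.rpow_add_one hB.ne', Real.rpow_add_one hA.ne', Real.rpow_neg hA.le]
  field_simp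

section

variable {E : Type*} [NormedAddCommGroup E] [MeasurableSpace E] {μ : Measure E}

theorem ae_eq_zero_of_integral_inv_norm_mul_eq_zero [NullSingletonClass μ] {g : E → ℝ}
    (hg₀ : 0 ≤ g) (hinv : Integrable (fun x => ‖x‖⁻¹ * g x) μ)
    (h : ∫ x, ‖x‖⁻¹ * g x ∂μ = 0) : g =ᵐ[μ] 0 := by
  have hne : ∀ᵐ x ∂μ, x ≠ 0 := ae_iff.2 (by simp)
  filter_upwards [(integral_eq_zero_iff_of_nonneg (fun x => mul_nonneg (by positivity) (hg₀ x))
    hinv).1 h, hne] with x hx hx₀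
  simpa [hx₀] using hx

theorem integral_norm_rpow_mul_le_setIntegral_ball_add [OpensMeasurableSpace E] {g : E → ℝ}
    {σ r : ℝ} (hσ : σ ≤ -1) (hr : 0 < r) (hg₀ : 0 ≤ g)
    (hball : IntegrableOn (fun x => ‖x‖ ^ σ * g x) (ball 0 r) μ)
    (hinv : Integrable (fun x => ‖x‖⁻¹ * g x) μ) :
    ∫ x, ‖x‖ ^ σ * g x ∂μ ≤
      ∫ x in ball 0 r, ‖x‖ ^ σ * g x ∂μ + r ^ (σ + 1) * ∫ x, ‖x‖⁻¹ * g x ∂μ := by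
  rw [← integral_indicator measurableSet_ball, ← integral_const_mul, ← integral_add
    ((integrable_indicator_iff measurableSet_ball).2 hball) (hinv.const_mul _)]
  refine integral_mono_of_nonneg (.of_forall fun x => mul_nonneg (by positivity) (hg₀ x))
    (((integrable_indicator_iff measurableSet_ball).2 hball).add (hinv.const_mul _))
    (.of_forall fun x => ?_)
  have hx₀ : 0 ≤ r ^ (σ + 1) * (‖x‖⁻¹ * g x) :=
    mul_nonneg (by positivity) (mul_nonneg (by positivity) (hg₀ x))
  dsimp only
  by_cases hx : x ∈ ball (0 : E) r
  · simp only [indicator_of_mem hx]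
    linarith
  · rw [indicator_of_notMem hx, zero_add, ← mul_assoc]
    exact mul_le_mul_of_nonneg_right (Real.rpow_le_rpow_add_one_mul_inv hr
      (by simpa using hx) hσ) (hg₀ x)

variable [NormedSpace ℝ E] [FiniteDimensional ℝ E] [BorelSpace E] [μ.IsAddHaarMeasure]

theorem setIntegral_norm_rpow_ball (t : ℝ) {r : ℝ} (hr : 0 < r) :
    ∫ x in ball (0 : E) r, ‖x‖ ^ t ∂μ =
      r ^ (t + Module.finrank ℝ E) * ∫ x in ball (0 : E) 1, ‖x‖ ^ t ∂μ := by
  have h := Measure.setIntegral_comp_smul_of_pos μ (fun x : E => ‖x‖ ^ t) (ball 0 1) hr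
  rw [smul_unitBall_of_pos hr, smul_eq_mul] at h
  have hscale : ∫ x in ball (0 : E) 1, ‖r • x‖ ^ t ∂μ =
      r ^ t * ∫ x in ball (0 : E) 1, ‖x‖ ^ t ∂μ := by
    rw [← integral_const_mul]
    refine setIntegral_congr_fun measurableSet_ball fun x _ => ?_
    rw [norm_smul, Real.norm_of_nonneg hr.le, Real.mul_rpow hr.le (norm_nonneg x)]
  rw [hscale, eq_inv_mul_iff_mul_eq₀ (by positivity)] at h
  rw [← h, Real.rpow_add hr, Real.rpow_natCast]
  ring

theorem memLp_norm_rpow_ball [Nontrivial E] {σ : ℝ} (hσ : -(Module.finrank ℝ E : ℝ) < 2 * σ)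
    (r : ℝ) : MemLp (fun x : E => ‖x‖ ^ σ) 2 (μ.restrict (ball 0 r)) := by
  have hmeas : AEStronglyMeasurable (fun x : E => ‖x‖ ^ σ) μ :=
    (measurable_norm.pow_const σ).aestronglyMeasurable
  rw [memLp_two_iff_integrable_sq hmeas.restrict]
  refine integrableOn_ball_of_norm_le_rpow (C := 1) (α := -(2 * σ)) Module.finrank_pos
    (by linarith) (.of_forall fun x => ?_) (hmeas.pow 2)
  rw [one_mul, neg_neg, ← Real.rpow_natCast, ← Real.rpow_mul (norm_nonneg x),
    Real.norm_of_nonneg (by positivity)]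
  norm_num [mul_comm]

theorem setIntegral_ball_norm_rpow_mul_le [Nontrivial E] {g : E → ℝ} {σ r : ℝ}
    (hσ : -(Module.finrank ℝ E : ℝ) < 2 * σ) (hr : 0 < r) (hg₀ : 0 ≤ g) (hg : MemLp g 2 μ) :
    ∫ x in ball 0 r, ‖x‖ ^ σ * g x ∂μ ≤
      √(∫ x in ball (0 : E) 1, ‖x‖ ^ (2 * σ) ∂μ) * r ^ (σ + Module.finrank ℝ E / 2) *
        √(∫ x, g x ^ 2 ∂μ) := by
  have hsq (x : E) : (‖x‖ ^ σ) ^ 2 = ‖x‖ ^ (2 * σ) := by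
    rw [← Real.rpow_natCast, ← Real.rpow_mul (norm_nonneg x)]
    norm_num [mul_comm]
  calc ∫ x in ball 0 r, ‖x‖ ^ σ * g x ∂μ
      ≤ √(∫ x in ball 0 r, (‖x‖ ^ σ) ^ 2 ∂μ) * √(∫ x in ball 0 r, g x ^ 2 ∂μ) :=
        integral_mul_le_sqrt_mul_sqrt (.of_forall fun x => by positivity) (.of_forall hg₀)
          (memLp_norm_rpow_ball hσ r) (hg.restrict _)
    _ ≤ √(r ^ (2 * σ + Module.finrank ℝ E) * ∫ x in ball (0 : E) 1, ‖x‖ ^ (2 * σ) ∂μ) *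
          √(∫ x, g x ^ 2 ∂μ) := by
        simp only [hsq, setIntegral_norm_rpow_ball _ hr]
        exact mul_le_mul_of_nonneg_left (Real.sqrt_le_sqrt (setIntegral_le_integral
          hg.integrable_sq (.of_forall fun x => sq_nonneg _))) (Real.sqrt_nonneg _)
    _ = _ := by
        rw [Real.sqrt_mul (by positivity), Real.sqrt_eq_rpow, ← Real.rpow_mul hr.le]
        ring_nf

theorem integral_norm_rpow_mul_le [Nontrivial E] {g : E → ℝ} {σ r : ℝ}
    (hσ₁ : -(Module.finrank ℝ E : ℝ) < 2 * σ) (hσ₂ : σ ≤ -1) (hr : 0 < r) (hg₀ : 0 ≤ g)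
    (hg : MemLp g 2 μ) (hinv : Integrable (fun x => ‖x‖⁻¹ * g x) μ) :
    ∫ x, ‖x‖ ^ σ * g x ∂μ ≤
      √(∫ x in ball (0 : E) 1, ‖x‖ ^ (2 * σ) ∂μ) * r ^ (σ + Module.finrank ℝ E / 2) *
        √(∫ x, g x ^ 2 ∂μ) + r ^ (σ + 1) * ∫ x, ‖x‖⁻¹ * g x ∂μ := by
  have hball : IntegrableOn (fun x => ‖x‖ ^ σ * g x) (ball 0 r) μ :=
    (memLp_norm_rpow_ball hσ₁ r).integrable_mul (hg.restrict _)
  grw [integral_norm_rpow_mul_le_setIntegral_ball_add hσ₂ hr hg₀ hball hinv,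
    setIntegral_ball_norm_rpow_mul_le hσ₁ hr hg₀ hg]

end

/-- Stated on the Fourier side, `F = 𝓕f`, so that `‖f‖_{𝒳^τ} = ∫ ‖ξ‖ ^ τ ‖F ξ‖`; the Plancherel
constant relating `‖f‖_{L²}` to `(∫ ‖F‖²)^{1/2}` is absorbed in `c`. -/
theorem X_sigma_interpolation_negative (σ : ℝ) (h₁ : -(3/2) < σ) (h₂ : σ < -1) :
    ∃ c : ℝ, 0 < c ∧ ∀ F : EuclideanSpace ℝ (Fin 3) → ℂ,
      Integrable (fun ξ => ‖F ξ‖ ^ 2) →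
      Integrable (fun ξ => ‖ξ‖⁻¹ * ‖F ξ‖) →
      ∫ ξ, ‖ξ‖ ^ σ * ‖F ξ‖ ≤
        c * Real.sqrt (∫ ξ, ‖F ξ‖ ^ 2) ^ (-2 * σ - 2) *
          (∫ ξ, ‖ξ‖⁻¹ * ‖F ξ‖) ^ (2 * σ + 3) := by
  set I := ∫ ξ in ball (0 : EuclideanSpace ℝ (Fin 3)) 1, ‖ξ‖ ^ (2 * σ)
  refine ⟨√I + 1, by positivity, fun F hF hinv => ?_⟩
  have hg₀ : 0 ≤ fun ξ => ‖F ξ‖ := fun ξ => norm_nonneg _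
  have h_null : (fun ξ => ‖F ξ‖) =ᵐ[volume] 0 → ∫ ξ, ‖ξ‖ ^ σ * ‖F ξ‖ = 0 := fun h =>
    integral_eq_zero_of_ae (h.mono fun ξ hξ => by simp_all)
  rcases (integral_nonneg fun ξ => sq_nonneg ‖F ξ‖ : 0 ≤ ∫ ξ, ‖F ξ‖ ^ 2).eq_or_lt with hT | hT
  · rw [h_null (ae_eq_zero_of_integral_sq_eq_zero hF hT.symm)]
    positivity
  rcases (integral_nonneg fun ξ => mul_nonneg (by positivity) (hg₀ ξ) :
      0 ≤ ∫ ξ, ‖ξ‖⁻¹ * ‖F ξ‖).eq_or_lt with hB | hB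
  · rw [h_null (ae_eq_zero_of_integral_inv_norm_mul_eq_zero hg₀ hinv hB.symm)]
    positivity
  obtain ⟨r, hr, hr_eq⟩ := exists_rpow_mul_add_rpow_mul_eq (C := √I) (σ := σ)
    (Real.sqrt_pos.2 hT) hB
  calc ∫ ξ, ‖ξ‖ ^ σ * ‖F ξ‖
      ≤ √I * r ^ (σ + Module.finrank ℝ (EuclideanSpace ℝ (Fin 3)) / 2) * √(∫ ξ, ‖F ξ‖ ^ 2) +
          r ^ (σ + 1) * ∫ ξ, ‖ξ‖⁻¹ * ‖F ξ‖ :=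
        integral_norm_rpow_mul_le (by norm_num; linarith) h₂.le hr hg₀
          (memLp_two_of_integrable_sq hg₀ hF) hinv
    _ = _ := by
        rw [finrank_euclideanSpace_fin, ← hr_eq]
        norm_num
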